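/- arXiv:2104.09028 — 2 statements merged into one kernel-verified Lean document; each statement's English description precedes it below -/
import Mathlib

section
/- Let 1 < γ ≤ 2 and ρ_0 > 0, and suppose 0 ≤ ρ ≤ ρ_0/2. Then ρ^γ/(γ(γ-1)) - ρ_0^γ/(γ(γ-1)) - (ρ_0^{γ-1}/(γ-1))(ρ - ρ_0) ≥ ((γ - 2 + (1/2)^{γ-1})/(2γ(γ-1)))·ρ_0^γ. -/
/-!
The remainder `R(ρ) = ρ^γ - ρ₀^γ - γ ρ₀^(γ-1) (ρ - ρ₀)` of the tangent line of the convex function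
`x ↦ x^γ` at `ρ₀` is decreasing on `[0, ρ₀]`, because its slope `γ (ρ^(γ-1) - ρ₀^(γ-1))` is
nonpositive there. So on `[0, ρ₀/2]` it is bounded below by its value at `ρ₀/2`, which is exactly
`(γ - 2 + (1/2)^(γ-1)) / 2 · ρ₀^γ`; dividing by `γ (γ - 1)` gives the claim.
-/

open Real

namespace Real

lemma rpow_add_mul_rpow_sub_one_mul_sub_le_rpow {γ b ρ : ℝ} (hγ : 1 ≤ γ) (hb : 0 < b)
    (hρ : 0 ≤ ρ) : b ^ γ + γ * b ^ (γ - 1) * (ρ - b) ≤ ρ ^ γ := by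
  have hbern : 1 + γ * (ρ / b - 1) ≤ (ρ / b) ^ γ := by
    simpa using one_add_mul_self_le_rpow_one_add
      (by linarith [div_nonneg hρ hb.le] : -1 ≤ ρ / b - 1) hγ
  rw [div_rpow hρ hb.le, le_div_iff₀ (rpow_pos_of_pos hb γ)] at hbern
  calc b ^ γ + γ * b ^ (γ - 1) * (ρ - b) = (1 + γ * (ρ / b - 1)) * b ^ γ := by
        rw [rpow_sub_one hb.ne']; field_simp
    _ ≤ ρ ^ γ := hbern

noncomputable def rpowTaylorRemainder (γ ρ₀ ρ : ℝ) : ℝ :=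
  ρ ^ γ - ρ₀ ^ γ - γ * ρ₀ ^ (γ - 1) * (ρ - ρ₀)

lemma rpowTaylorRemainder_le_of_le_of_le {γ ρ₀ ρ b : ℝ} (hγ : 1 ≤ γ) (hρ : 0 ≤ ρ) (hb : 0 < b)
    (hρb : ρ ≤ b) (hbρ₀ : b ≤ ρ₀) :
    rpowTaylorRemainder γ ρ₀ b ≤ rpowTaylorRemainder γ ρ₀ ρ := by
  have htangent := rpow_add_mul_rpow_sub_one_mul_sub_le_rpow hγ hb hρ
  have hslope : 0 ≤ γ * (ρ₀ ^ (γ - 1) - b ^ (γ - 1)) * (b - ρ) :=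
    mul_nonneg (mul_nonneg (by linarith)
      (sub_nonneg.2 (rpow_le_rpow hb.le hbρ₀ (by linarith)))) (sub_nonneg.2 hρb)
  unfold rpowTaylorRemainder
  linarith

lemma rpowTaylorRemainder_half (γ : ℝ) {ρ₀ : ℝ} (hρ₀ : 0 < ρ₀) :
    rpowTaylorRemainder γ ρ₀ (ρ₀ / 2) = (γ - 2 + (1 / 2 : ℝ) ^ (γ - 1)) / 2 * ρ₀ ^ γ := by
  rw [rpowTaylorRemainder, div_eq_mul_inv, mul_comm ρ₀, mul_rpow (by norm_num) hρ₀.le,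
    rpow_sub_one hρ₀.ne', rpow_sub_one (by norm_num : (1 / 2 : ℝ) ≠ 0), one_div]
  field_simp
  ring

end Real

theorem internal_energy_taylor_lower_bound_general
    (γ ρ ρ₀ : ℝ)
    (hγ1 : 1 < γ) (hρ₀ : 0 < ρ₀)
    (hρ : 0 ≤ ρ) (hρ2 : ρ ≤ ρ₀ / 2) :
    (γ - 2 + (1 / 2 : ℝ) ^ (γ - 1)) / (2 * γ * (γ - 1)) * ρ₀ ^ γ
      ≤ ρ ^ γ / (γ * (γ - 1)) - ρ₀ ^ γ / (γ * (γ - 1))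
        - ρ₀ ^ (γ - 1) / (γ - 1) * (ρ - ρ₀) := by
  have hγ : 0 < γ * (γ - 1) := mul_pos (by linarith) (by linarith)
  have hmono : rpowTaylorRemainder γ ρ₀ (ρ₀ / 2) ≤ rpowTaylorRemainder γ ρ₀ ρ :=
    rpowTaylorRemainder_le_of_le_of_le hγ1.le hρ (by positivity) hρ2 (by linarith)
  rw [rpowTaylorRemainder_half γ hρ₀] at hmono
  calc (γ - 2 + (1 / 2 : ℝ) ^ (γ - 1)) / (2 * γ * (γ - 1)) * ρ₀ ^ γ
        = (γ - 2 + (1 / 2 : ℝ) ^ (γ - 1)) / 2 * ρ₀ ^ γ / (γ * (γ - 1)) := by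
          field_simp
    _ ≤ rpowTaylorRemainder γ ρ₀ ρ / (γ * (γ - 1)) := by gcongr
    _ = _ := by
          rw [rpowTaylorRemainder]
          field_simp

theorem internal_energy_taylor_lower_bound
    (γ ρ ρ₀ : ℝ)
    (hγ1 : 1 < γ) (hγ2 : γ ≤ 2) (hρ₀ : 0 < ρ₀)
    (hρ : 0 ≤ ρ) (hρ2 : ρ ≤ ρ₀ / 2) :
    (γ - 2 + (1 / 2 : ℝ) ^ (γ - 1)) / (2 * γ * (γ - 1)) * ρ₀ ^ γ
      ≤ ρ ^ γ / (γ * (γ - 1)) - ρ₀ ^ γ / (γ * (γ - 1))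
        - ρ₀ ^ (γ - 1) / (γ - 1) * (ρ - ρ₀) :=
  internal_energy_taylor_lower_bound_general γ ρ ρ₀ hγ1 hρ₀ hρ hρ2
end

section
/- Let η_*(ρ,m) = m²/(2ρ) + ρ^γ/(γ(γ-1)) (γ > 1), let u = (ρ,m), u₀ = (ρ₀,m₀) ∈ (0,∞)×ℝ, and set a = ∂η_*/∂ρ(u₀) + ∂η_*/∂m(u₀)·(v₀ - ρ₀^θ), where v₀ = m₀/ρ₀ and θ = (γ-1)/2. Let w(u) = m/ρ + ρ^θ/θ and R = ∫₀¹(1-τ)·ᵗ(u-u₀)∇²η_*(u₀+τ(u-u₀))(u-u₀)dτ ≥ 0. Then η_*(u) - η_*(u₀) - a(ρ-ρ₀) = v₀ρ(w(u)-w(u₀)) - v₀∫₀¹(1-τ)(θ+1)(ρ₀+τ(ρ-ρ₀))^{θ-1}dτ·(ρ-ρ₀)² + R. -/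
open Real

lemma taylor_integral_key (θ ρ ρ₀ : ℝ) (hρ : 0 < ρ) (hρ₀ : 0 < ρ₀) :
    (∫ τ in (0:ℝ)..1, (1 - τ) * (θ + 1) * (ρ₀ + τ * (ρ - ρ₀)) ^ (θ - 1))
      * ((ρ - ρ₀) ^ 2 * θ)
    = ρ ^ (θ + 1) - ρ₀ ^ (θ + 1) - (θ + 1) * ρ₀ ^ θ * (ρ - ρ₀) := by
  set Δ := ρ - ρ₀ with hΔ
  have hpos : ∀ τ : ℝ, τ ∈ Set.uIcc (0:ℝ) 1 → 0 < ρ₀ + τ * Δ := by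
    intro τ hτ
    rw [Set.uIcc_of_le (by norm_num)] at hτ
    have h0 : 0 ≤ τ := hτ.1
    have h1 : τ ≤ 1 := hτ.2
    have : ρ₀ + τ * Δ = (1 - τ) * ρ₀ + τ * ρ := by rw [hΔ]; ring
    rw [this]
    rcases eq_or_lt_of_le h1 with h | h
    · subst h; simpa using hρ
    · nlinarith [mul_nonneg h0 hρ.le, mul_pos (sub_pos.mpr h) hρ₀]
  have hderiv : ∀ τ ∈ Set.uIcc (0:ℝ) 1,
      HasDerivAt (fun t => (1 - t) * (θ + 1) * (ρ₀ + t * Δ) ^ θ * Δ + (ρ₀ + t * Δ) ^ (θ + 1))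
        ((1 - τ) * (θ + 1) * (ρ₀ + τ * Δ) ^ (θ - 1) * (Δ ^ 2 * θ)) τ := by
    intro τ hτ
    have hx := hpos τ hτ
    have hlin : HasDerivAt (fun t : ℝ => ρ₀ + t * Δ) Δ τ := by
      simpa using ((hasDerivAt_id τ).mul_const Δ).const_add ρ₀
    have hpow : HasDerivAt (fun t : ℝ => (ρ₀ + t * Δ) ^ θ)
        (θ * (ρ₀ + τ * Δ) ^ (θ - 1) * Δ) τ := by
      have := (Real.hasDerivAt_rpow_const (x := ρ₀ + τ * Δ) (p := θ) (Or.inl hx.ne')).comp τ hlin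
      simpa [mul_comm, mul_assoc, Function.comp_def] using this
    have hpow1 : HasDerivAt (fun t : ℝ => (ρ₀ + t * Δ) ^ (θ + 1))
        ((θ + 1) * (ρ₀ + τ * Δ) ^ θ * Δ) τ := by
      have := (Real.hasDerivAt_rpow_const (x := ρ₀ + τ * Δ) (p := θ + 1) (Or.inl hx.ne')).comp τ hlin
      simpa [add_sub_cancel_right, mul_comm, mul_assoc, Function.comp_def] using this
    have hc : HasDerivAt (fun t : ℝ => (1 - t) * (θ + 1)) (-(θ + 1)) τ := by
      simpa using ((hasDerivAt_id τ).const_sub 1).mul_const (θ + 1)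
    have h1 : HasDerivAt (fun t => ((1 - t) * (θ + 1)) * (ρ₀ + t * Δ) ^ θ)
        (-(θ + 1) * (ρ₀ + τ * Δ) ^ θ + ((1 - τ) * (θ + 1)) * (θ * (ρ₀ + τ * Δ) ^ (θ - 1) * Δ)) τ :=
      hc.mul hpow
    have := (h1.mul_const Δ).add hpow1
    refine HasDerivAt.congr_deriv this ?_
    ring
  have hcont : IntervalIntegrable
      (fun τ => (1 - τ) * (θ + 1) * (ρ₀ + τ * Δ) ^ (θ - 1) * (Δ ^ 2 * θ)) MeasureTheory.volume 0 1 := by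
    apply ContinuousOn.intervalIntegrable
    apply ContinuousOn.mul
    apply ContinuousOn.mul
    · fun_prop
    · exact ContinuousOn.rpow_const (by fun_prop) (fun τ hτ => Or.inl (hpos τ hτ).ne')
    · fun_prop
  have heq := intervalIntegral.integral_eq_sub_of_hasDerivAt hderiv hcont
  have hrw : (∫ τ in (0:ℝ)..1, (1 - τ) * (θ + 1) * (ρ₀ + τ * Δ) ^ (θ - 1) * (Δ ^ 2 * θ))
      = (∫ τ in (0:ℝ)..1, (1 - τ) * (θ + 1) * (ρ₀ + τ * Δ) ^ (θ - 1)) * (Δ ^ 2 * θ) :=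
    intervalIntegral.integral_mul_const _ _
  rw [hrw] at heq
  rw [heq]
  have : ρ₀ + 1 * Δ = ρ := by rw [hΔ]; ring
  rw [this]
  simp [hΔ]
  ring

theorem entropy_taylor_decomposition
    (γ θ ρ m ρ₀ m₀ : ℝ)
    (hγ : 1 < γ) (hθ : θ = (γ - 1) / 2)
    (hρ : 0 < ρ) (hρ₀ : 0 < ρ₀) :
    let η : ℝ → ℝ → ℝ := fun r q => q ^ 2 / (2 * r) + r ^ γ / (γ * (γ - 1))
    let v₀ : ℝ := m₀ / ρ₀
    let a : ℝ := (-(v₀ ^ 2) / 2 + ρ₀ ^ (γ - 1) / (γ - 1)) + v₀ * (v₀ - ρ₀ ^ θ)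
    let w : ℝ → ℝ → ℝ := fun r q => q / r + r ^ θ / θ
    let R : ℝ := η ρ m - η ρ₀ m₀
      - ((-(v₀ ^ 2) / 2 + ρ₀ ^ (γ - 1) / (γ - 1)) * (ρ - ρ₀) + v₀ * (m - m₀))
    (η ρ m - η ρ₀ m₀ - a * (ρ - ρ₀)
      = v₀ * ρ * (w ρ m - w ρ₀ m₀)
        - v₀ * ((∫ τ in (0:ℝ)..1,
            (1 - τ) * (θ + 1) * (ρ₀ + τ * (ρ - ρ₀)) ^ (θ - 1)) * (ρ - ρ₀) ^ 2)
        + R) ∧ 0 ≤ R := by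
  have hθ0 : 0 < θ := by rw [hθ]; linarith
  have hγ1 : 0 < γ - 1 := by linarith
  have hγ0 : 0 < γ := by linarith
  intro η v₀ a w R
  constructor
  · have hkey := taylor_integral_key θ ρ ρ₀ hρ hρ₀
    rw [Real.rpow_add_one hρ.ne' θ, Real.rpow_add_one hρ₀.ne' θ] at hkey
    have hI : (∫ τ in (0:ℝ)..1,
        (1 - τ) * (θ + 1) * (ρ₀ + τ * (ρ - ρ₀)) ^ (θ - 1)) * (ρ - ρ₀) ^ 2
        = (ρ ^ θ * ρ - ρ₀ ^ θ * ρ₀ - (θ + 1) * ρ₀ ^ θ * (ρ - ρ₀)) / θ := by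
      rw [eq_div_iff hθ0.ne']
      linear_combination hkey
    show η ρ m - η ρ₀ m₀ - a * (ρ - ρ₀) = _
    rw [hI]
    simp only [η, v₀, a, w, R]
    field_simp
    ring
  · have hb := one_add_mul_self_le_rpow_one_add
      (s := ρ / ρ₀ - 1) (by
        have : 0 < ρ / ρ₀ := div_pos hρ hρ₀
        linarith) (p := γ) hγ.le
    have h1s : 1 + (ρ / ρ₀ - 1) = ρ / ρ₀ := by ring
    rw [h1s, Real.div_rpow hρ.le hρ₀.le] at hb
    have hρ₀γ : 0 < ρ₀ ^ γ := Real.rpow_pos_of_pos hρ₀ γ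
    have hpot : ρ₀ ^ γ + γ * ρ₀ ^ (γ - 1) * (ρ - ρ₀) ≤ ρ ^ γ := by
      rw [Real.rpow_sub_one hρ₀.ne' γ]
      have := mul_le_mul_of_nonneg_right hb hρ₀γ.le
      rw [div_mul_cancel₀ _ hρ₀γ.ne'] at this
      calc ρ₀ ^ γ + γ * (ρ₀ ^ γ / ρ₀) * (ρ - ρ₀)
          = (1 + γ * (ρ / ρ₀ - 1)) * ρ₀ ^ γ := by field_simp
        _ ≤ ρ ^ γ := this
    have hRdecomp : R = (m - (m₀ / ρ₀) * ρ) ^ 2 / (2 * ρ)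
        + (ρ ^ γ - ρ₀ ^ γ - γ * ρ₀ ^ (γ - 1) * (ρ - ρ₀)) / (γ * (γ - 1)) := by
      simp only [R, η, v₀]
      rw [Real.rpow_sub_one hρ₀.ne' γ]
      field_simp
      ring
    rw [hRdecomp]
    have h1 : 0 ≤ (m - (m₀ / ρ₀) * ρ) ^ 2 / (2 * ρ) := by positivity
    have h2 : 0 ≤ (ρ ^ γ - ρ₀ ^ γ - γ * ρ₀ ^ (γ - 1) * (ρ - ρ₀)) / (γ * (γ - 1)) := by
      apply div_nonneg
      · linarith
      · positivity
    linarith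
end
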